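/- Let M be a maximal matching of a graph G avoiding a set O of edges (M ∩ O = ∅) in the SAT-reduction graph G'_φ. Then for each variable gadget path P_i = (x_i, x'_i, ¬x_i), M contains exactly one of the two edges {x_i, x'_i}, {x'_i, ¬x_i}. -/

import Mathlib

open SimpleGraph

variable {V : Type*}

def IsMatchingF (G : SimpleGraph V) (M : Finset (Sym2 V)) : Prop :=
  (∀ e ∈ M, e ∈ G.edgeSet) ∧
    ∀ e ∈ M, ∀ f ∈ M, e ≠ f → ∀ v : V, v ∈ e → v ∉ f

def IsMaximalMatchingF [DecidableEq V] (G : SimpleGraph V) (M : Finset (Sym2 V)) : Prop :=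
  IsMatchingF G M ∧ ∀ e ∈ G.edgeSet, e ∉ M → ¬ IsMatchingF G (insert e M)

/-- `v` is unmatched by the matching `M`. -/
def Unmatched (M : Finset (Sym2 V)) (v : V) : Prop := ∀ e ∈ M, v ∉ e

/-- The graph `G[M₁ △ M₂]` on the symmetric difference of two edge sets. -/
def sdGraph [DecidableEq V] (M₁ M₂ : Finset (Sym2 V)) : SimpleGraph V where
  Adj v w := v ≠ w ∧ s(v, w) ∈ (M₁ \ M₂) ∪ (M₂ \ M₁)
  symm := by
    constructor
    intro v w h
    exact ⟨h.1.symm, by rw [Sym2.eq_swap]; exact h.2⟩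
  loopless := ⟨fun v h => h.1 rfl⟩

/-- The walk `p` is a path which is exactly a connected component of `H`
(it spans the component and uses all of its edges, and has at least one edge). -/
def IsPathComponent [DecidableEq V] (H : SimpleGraph V) {u w : V} (p : H.Walk u w) : Prop :=
  p.IsPath ∧ 1 ≤ p.length ∧
    (∀ x : V, x ∈ p.support ↔ H.connectedComponentMk x = H.connectedComponentMk u) ∧
    (∀ a b : V, H.Adj a b → a ∈ p.support → s(a, b) ∈ p.edges)

/-- The closed walk `p` is a cycle which is exactly a connected component of `H`. -/
def IsCycleComponent [DecidableEq V] (H : SimpleGraph V) {u : V} (p : H.Walk u u) : Prop :=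
  p.IsCycle ∧
    (∀ x : V, x ∈ p.support ↔ H.connectedComponentMk x = H.connectedComponentMk u) ∧
    (∀ a b : V, H.Adj a b → a ∈ p.support → s(a, b) ∈ p.edges)

/-- Vertex type for the SAT-reduction graph `G'_φ`: variable gadget vertices
`(i, 0) = x_i`, `(i, 1) = x'_i`, `(i, 2) = ¬x_i`, and clause gadget vertices
`(j, 0) = c_{j,1}`, `(j, 1) = d_j`, `(j, 2) = c_{j,2}`, `(j, 3) = d'_j`, `(j, 4) = c_{j,3}`. -/
abbrev SatVertex (n m : ℕ) : Type := (Fin n × Fin 3) ⊕ (Fin m × Fin 5)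

/-- Variable gadget edges: the path `(x_i, x'_i, ¬x_i)`. -/
def varEdges (n m : ℕ) : Set (Sym2 (SatVertex n m)) :=
  {e | ∃ i : Fin n,
    e = s(Sum.inl (i, 0), Sum.inl (i, 1)) ∨ e = s(Sum.inl (i, 1), Sum.inl (i, 2))}

/-- Clause gadget edges: the path `(c_{j,1}, d_j, c_{j,2}, d'_j, c_{j,3})` for a clause
with three literals, and `(c_{j,1}, d_j, c_{j,2})` for a clause with two literals. -/
def clauseEdges {n m : ℕ} (φ : Fin m → List (Fin n × Bool)) : Set (Sym2 (SatVertex n m)) :=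
  {e | ∃ (j : Fin m) (k : ℕ) (hk : k + 1 < 5),
    k < 2 * ((φ j).length - 1) ∧
    e = s(Sum.inr (j, ⟨k, by omega⟩), Sum.inr (j, ⟨k + 1, hk⟩))}

/-- The forbidden edges `O_φ`, connecting the `k`-th literal-occurrence vertex of
clause `j` to the vertex of the corresponding literal in the variable gadget. -/
def connEdges {n m : ℕ} (φ : Fin m → List (Fin n × Bool)) : Set (Sym2 (SatVertex n m)) :=
  {e | ∃ (j : Fin m) (k : ℕ) (hk : 2 * k < 5) (hlen : k < (φ j).length),
    e = s(Sum.inr (j, ⟨2 * k, hk⟩),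
          Sum.inl (((φ j).get ⟨k, hlen⟩).1,
            if ((φ j).get ⟨k, hlen⟩).2 then (0 : Fin 3) else 2))}

/-- The SAT-reduction graph `G'_φ`. -/
def satGraph {n m : ℕ} (φ : Fin m → List (Fin n × Bool)) : SimpleGraph (SatVertex n m) :=
  SimpleGraph.fromEdgeSet (varEdges n m ∪ clauseEdges φ ∪ connEdges φ)

/-! The two gadget edges share `x'_i`, so at most one is in `M`. If neither were, then every
edge of `M` meeting `{x_i, x'_i}` would lie in `O_φ`, so `{x_i, x'_i}` could be added to `M`,
contradicting maximality. -/

section Matching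

variable {V : Type*} {G : SimpleGraph V} {M : Finset (Sym2 V)}

theorem IsMatchingF.notMem_of_shared_vertex (hM : IsMatchingF G M) {e f : Sym2 V}
    (he : e ∈ M) (hfe : f ≠ e) {v : V} (hve : v ∈ e) (hvf : v ∈ f) : f ∉ M :=
  fun hf => hM.2 e he f hf hfe.symm v hve hvf

theorem IsMatchingF.insert [DecidableEq V] (hM : IsMatchingF G M) {e : Sym2 V}
    (he : e ∈ G.edgeSet) (hdisj : ∀ f ∈ M, ∀ v ∈ e, v ∉ f) : IsMatchingF G (insert e M) := by
  refine ⟨fun f hf => ?_, fun f hf g hg hfg v hvf hvg => ?_⟩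
  · rcases Finset.mem_insert.1 hf with rfl | hf
    exacts [he, hM.1 f hf]
  rcases Finset.mem_insert.1 hf with hfe | hf <;> rcases Finset.mem_insert.1 hg with hatLeast | hg
  · exact hfg (hfe.trans hatLeast.symm)
  · exact hdisj g hg v (hfe ▸ hvf) hvg
  · exact hdisj f hf v (hatLeast ▸ hvg) hvf
  · exact hM.2 f hf g hg hfg v hvf hvg

theorem IsMaximalMatchingF.exists_shared_vertex [DecidableEq V] (hM : IsMaximalMatchingF G M)
    {e : Sym2 V} (he : e ∈ G.edgeSet) (heM : e ∉ M) : ∃ f ∈ M, ∃ v ∈ e, v ∈ f := by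
  by_contra! hdisj
  exact hM.2 e he heM (hM.1.insert he hdisj)

end Matching

section SatGraph

variable {n m : ℕ} {φ : Fin m → List (Fin n × Bool)}

theorem varEdge_left_mem_satGraph_edgeSet (i : Fin n) :
    s(Sum.inl (i, 0), Sum.inl (i, 1)) ∈ (satGraph φ).edgeSet := by
  rw [satGraph, edgeSet_fromEdgeSet]
  exact ⟨Or.inl (Or.inl ⟨i, Or.inl rfl⟩), by simp⟩

theorem satGraph_edge_of_inl_mem {e : Sym2 (SatVertex n m)} (he : e ∈ (satGraph φ).edgeSet)
    {i : Fin n} {k : Fin 3} (hk : Sum.inl (i, k) ∈ e) :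
    e = s(Sum.inl (i, 0), Sum.inl (i, 1)) ∨ e = s(Sum.inl (i, 1), Sum.inl (i, 2)) ∨
      e ∈ connEdges φ := by
  rw [satGraph, edgeSet_fromEdgeSet] at he
  rcases he.1 with (⟨i', rfl | rfl⟩ | ⟨j, k', hk', -, rfl⟩) | hconn
  · simp only [Sym2.mem_iff, Sum.inl.injEq, Prod.mk.injEq] at hk
    obtain ⟨rfl, -⟩ | ⟨rfl, -⟩ := hk <;> simp
  · simp only [Sym2.mem_iff, Sum.inl.injEq, Prod.mk.injEq] at hk
    obtain ⟨rfl, -⟩ | ⟨rfl, -⟩ := hk <;> simp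
  · simp at hk
  · exact Or.inr (Or.inr hconn)

end SatGraph

theorem stmt13 {n m : ℕ} (φ : Fin m → List (Fin n × Bool))
    (M : Finset (Sym2 (SatVertex n m)))
    (hM : IsMaximalMatchingF (satGraph φ) M)
    (hO : ∀ e ∈ connEdges φ, e ∉ M) :
    ∀ i : Fin n,
      Xor' (s(Sum.inl (i, 0), Sum.inl (i, 1)) ∈ M)
           (s(Sum.inl (i, 1), Sum.inl (i, 2)) ∈ M) := by
  intro i
  have hne : s(Sum.inl (i, 0), Sum.inl (i, 1)) ≠ (s(Sum.inl (i, 1), Sum.inl (i, 2)) :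
      Sym2 (SatVertex n m)) := by simp
  have hatMost : s(Sum.inl (i, 0), Sum.inl (i, 1)) ∈ M → s(Sum.inl (i, 1), Sum.inl (i, 2)) ∉ M :=
    fun h => hM.1.notMem_of_shared_vertex h hne.symm (v := Sum.inl (i, 1)) (by simp) (by simp)
  have hatLeast : s(Sum.inl (i, 0), Sum.inl (i, 1)) ∈ M ∨ s(Sum.inl (i, 1), Sum.inl (i, 2)) ∈ M := by
    by_contra! ⟨h₁, h₂⟩
    obtain ⟨f, hf, v, hv, hvf⟩ := hM.exists_shared_vertex (varEdge_left_mem_satGraph_edgeSet i) h₁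
    obtain ⟨k, rfl⟩ : ∃ k, v = Sum.inl (i, k) := by
      rcases Sym2.mem_iff.1 hv with rfl | rfl <;> exact ⟨_, rfl⟩
    rcases satGraph_edge_of_inl_mem (hM.1.1 f hf) hvf with rfl | rfl | hconn
    exacts [h₁ hf, h₂ hf, hO f hconn hf]
  exact hatLeast.elim (fun h => Or.inl ⟨h, hatMost h⟩) (fun h => Or.inr ⟨h, fun h' => hatMost h' h⟩)
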